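/- arXiv:0801.1478 — 2 statements merged into one kernel-verified Lean document; each statement's English description precedes it below -/
import Mathlib

section
/- Let C be a d-uniform clutter on vertex set X whose set covering polyhedron Q(A) is integral. Then there exist d mutually disjoint minimal vertex covers X_1,...,X_d of C such that X = X_1 ∪ ... ∪ X_d. In particular every edge of C meets each X_k in exactly one vertex. -/
open Finset

/-- A clutter on vertex set `Fin n`: a family of nonempty edges, none contained in another. -/
structure Clutter (n : ℕ) where
  edges : Finset (Finset (Fin n))
  nonempty_edges : ∀ e ∈ edges, e.Nonempty
  antichain : ∀ e ∈ edges, ∀ f ∈ edges, e ⊆ f → e = f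

namespace Clutter

variable {n : ℕ}

/-- `C` is `d`-uniform: every edge has exactly `d` vertices. -/
def Uniform (C : Clutter n) (d : ℕ) : Prop := ∀ e ∈ C.edges, e.card = d

/-- `S` is a vertex cover of `C`. -/
def IsCover (C : Clutter n) (S : Finset (Fin n)) : Prop := ∀ e ∈ C.edges, (e ∩ S).Nonempty

/-- `S` is a minimal vertex cover of `C`. -/
def IsMinCover (C : Clutter n) (S : Finset (Fin n)) : Prop :=
  C.IsCover S ∧ ∀ T ⊆ S, C.IsCover T → T = S

/-- The vertex covering number `α₀(C)`. -/
noncomputable def coverNumber (C : Clutter n) : ℕ :=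
  sInf {k | ∃ S : Finset (Fin n), C.IsCover S ∧ S.card = k}

/-- The edge independence (matching) number `β₁(C)`. -/
noncomputable def matchNumber (C : Clutter n) : ℕ :=
  sSup {k | ∃ M : Finset (Finset (Fin n)), M ⊆ C.edges ∧
    (∀ e ∈ M, ∀ f ∈ M, e ≠ f → Disjoint e f) ∧ M.card = k}

/-- `C` has a perfect matching: pairwise disjoint edges covering all vertices. -/
def HasPerfectMatching (C : Clutter n) : Prop :=
  ∃ M : Finset (Finset (Fin n)), M ⊆ C.edges ∧
    (∀ e ∈ M, ∀ f ∈ M, e ≠ f → Disjoint e f) ∧ (∀ i : Fin n, ∃ e ∈ M, i ∈ e)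

/-- The set covering polyhedron `Q(A) = {x : x ≥ 0, xA ≥ 1}`. -/
def QA (C : Clutter n) : Set (Fin n → ℝ) :=
  {x | (∀ i, 0 ≤ x i) ∧ ∀ e ∈ C.edges, 1 ≤ ∑ i ∈ e, x i}

/-- `Q(A)` is an integral polyhedron: all its vertices (extreme points) are integral. -/
def QAIntegral (C : Clutter n) : Prop :=
  ∀ x ∈ Set.extremePoints ℝ C.QA, ∀ i, ∃ z : ℤ, x i = (z : ℝ)

/-- Deletion of a vertex: remove `v` and all edges through it. -/
def delete (C : Clutter n) (v : Fin n) : Clutter n where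
  edges := C.edges.filter (fun e => v ∉ e)
  nonempty_edges := fun e he => C.nonempty_edges e (mem_filter.mp he).1
  antichain := fun e he f hf hef =>
    C.antichain e (mem_filter.mp he).1 f (mem_filter.mp hf).1 hef

/-- The edges of the minor of `C` obtained by deleting the vertices in `D`
(setting them to `0`) and contracting the vertices in `U` (setting them to `1`):
the minimal nonempty sets of the form `e \ U` with `e` an edge disjoint from `D`. -/
def minorEdges (C : Clutter n) (D U : Finset (Fin n)) : Finset (Finset (Fin n)) :=
  ((C.edges.filter (fun e => Disjoint e D)).image (fun e => e \ U)).filter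
    (fun e => e.Nonempty ∧
      ∀ f ∈ (C.edges.filter (fun e => Disjoint e D)).image (fun e => e \ U),
        f.Nonempty → f ⊆ e → f = e)

/-- The minor of `C` determined by deleting `D` and contracting `U`. -/
def minor (C : Clutter n) (D U : Finset (Fin n)) : Clutter n where
  edges := C.minorEdges D U
  nonempty_edges := fun e he => ((mem_filter.mp he).2).1
  antichain := fun e he f hf hef =>
    ((mem_filter.mp hf).2).2 e (mem_filter.mp he).1 ((mem_filter.mp he).2).1 hef

/-- The König property: `α₀(C) = β₁(C)`. -/
def HasKonig (C : Clutter n) : Prop := C.coverNumber = C.matchNumber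

/-- The packing property: every (proper) minor of `C` has the König property. -/
def PackingProperty (C : Clutter n) : Prop :=
  ∀ D U : Finset (Fin n), Disjoint D U →
    (∀ e ∈ C.edges, Disjoint e D → ¬ e ⊆ U) → (C.minor D U).HasKonig

/-- The max-flow min-cut property: for every nonnegative integral `α` the LP
`min{⟨α,x⟩ : x ≥ 0, xA ≥ 1}` and its dual `max{⟨y,1⟩ : y ≥ 0, Ay ≤ α}` both have
integral optimum solutions (expressed via a pair of integral feasible solutions
with equal objective values, which are then optimal by LP duality). -/
def HasMFMC (C : Clutter n) : Prop :=
  ∀ α : Fin n → ℕ,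
    ∃ (x : Fin n → ℕ) (y : Finset (Fin n) → ℕ),
      (∀ e ∈ C.edges, 1 ≤ ∑ i ∈ e, x i) ∧
      (∀ e, e ∉ C.edges → y e = 0) ∧
      (∀ i : Fin n, ∑ e ∈ C.edges.filter (fun e => i ∈ e), y e ≤ α i) ∧
      (∑ i, α i * x i = ∑ e ∈ C.edges, y e)

/-- The incidence matrix of `C`, with columns indexed by the edges. -/
def inc (C : Clutter n) : Matrix (Fin n) {e // e ∈ C.edges} ℤ :=
  Matrix.of fun i e => if i ∈ e.1 then 1 else 0

end Clutter

/-- `Δ_r(A) = 1`: the gcd of all nonzero `r × r` subdeterminants of `A` is `1`,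
i.e. every common divisor of them is a unit. -/
def DeltaOne {m m' : Type*} [Fintype m] [Fintype m'] (A : Matrix m m' ℤ) (r : ℕ) : Prop :=
  ∀ k : ℤ, (∀ (f : Fin r → m) (g : Fin r → m'), Function.Injective f → Function.Injective g →
    (A.submatrix f g).det ≠ 0 → k ∣ (A.submatrix f g).det) → IsUnit k

/-!
Let `T` be a set of vertices meeting every edge in exactly `k ≥ 1` vertices. The face of `Q(A)`
on which `x` vanishes off `T` and every edge inequality is tight contains `𝟙_T / k`, and it is
compact because each coordinate is at most the sum over an edge through it. By Krein–Milman it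
has an extreme point; this is a vertex of `Q(A)`, hence a `0/1` vector, the indicator of some
`S ⊆ T` meeting every edge exactly once. As `T \ S` meets every edge in `k - 1` vertices,
peeling off such transversals from `T = X`, `k = d` partitions `X` into `d` of them, and a
transversal all of whose vertices lie on edges is a minimal vertex cover.
-/

namespace Clutter

open Function

variable {n : ℕ} {C : Clutter n}

def tightFace (C : Clutter n) (T : Finset (Fin n)) : Set (Fin n → ℝ) :=
  {x | x ∈ C.QA ∧ (∀ j ∉ T, x j = 0) ∧ ∀ e ∈ C.edges, ∑ i ∈ e, x i = 1}

theorem isExtreme_tightFace (T : Finset (Fin n)) : IsExtreme ℝ C.QA (C.tightFace T) := by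
  refine ⟨fun x hx => hx.1, ?_⟩
  rintro y hy z hz x ⟨hxQ, hxT, hxe⟩ ⟨a, b, ha, hb, hab, rfl⟩
  refine ⟨hy, fun j hj => ?_, fun e he => ?_⟩
  · have := hxT j hj
    simp only [Pi.add_apply, Pi.smul_apply, smul_eq_mul] at this
    nlinarith [hy.1 j, hz.1 j]
  · have := hxe e he
    simp only [Pi.add_apply, Pi.smul_apply, smul_eq_mul, Finset.sum_add_distrib,
      ← Finset.mul_sum] at this
    nlinarith [hy.2 e he, hz.2 e he]

theorem isClosed_tightFace (T : Finset (Fin n)) : IsClosed (C.tightFace T) := by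
  simp only [tightFace, QA, Set.ofPred_and, Set.ofPred_forall]
  refine ((isClosed_iInter fun i => isClosed_le continuous_const (continuous_apply i)).inter
    (isClosed_iInter fun e => isClosed_iInter fun _ => isClosed_le continuous_const
      (continuous_finsetSum e fun i _ => continuous_apply i))).inter
    ((isClosed_iInter fun j => isClosed_iInter fun _ =>
      isClosed_eq (continuous_apply j) continuous_const).inter
    (isClosed_iInter fun e => isClosed_iInter fun _ =>
      isClosed_eq (continuous_finsetSum e fun i _ => continuous_apply i) continuous_const))

theorem tightFace_subset_Icc (hiso : ∀ i : Fin n, ∃ e ∈ C.edges, i ∈ e) (T : Finset (Fin n)) :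
    C.tightFace T ⊆ Set.Icc 0 1 := by
  rintro x ⟨hxQ, -, hxe⟩
  refine ⟨hxQ.1, fun i => ?_⟩
  obtain ⟨e, he, hie⟩ := hiso i
  calc x i ≤ ∑ j ∈ e, x j := Finset.single_le_sum (fun j _ => hxQ.1 j) hie
    _ = 1 := hxe e he

theorem isCompact_tightFace (hiso : ∀ i : Fin n, ∃ e ∈ C.edges, i ∈ e) (T : Finset (Fin n)) :
    IsCompact (C.tightFace T) :=
  isCompact_Icc.of_isClosed_subset (isClosed_tightFace T) (tightFace_subset_Icc hiso T)

theorem exists_transversal_subset (hiso : ∀ i : Fin n, ∃ e ∈ C.edges, i ∈ e)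
    (hQ : C.QAIntegral) {T : Finset (Fin n)} {k : ℕ} (hk : 0 < k)
    (hT : ∀ e ∈ C.edges, (e ∩ T).card = k) :
    ∃ S ⊆ T, ∀ e ∈ C.edges, (e ∩ S).card = 1 := by
  classical
  have hne : (C.tightFace T).Nonempty := by
    refine ⟨fun i => if i ∈ T then (k : ℝ)⁻¹ else 0, ⟨fun i => by positivity, fun e he => ?_⟩,
      fun j hj => if_neg hj, fun e he => ?_⟩ <;>
    · rw [Finset.sum_ite_mem, Finset.sum_const, hT e he, nsmul_eq_mul,
        mul_inv_cancel₀ (by positivity)]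
  obtain ⟨x, hx⟩ := (isCompact_tightFace hiso T).extremePoints_nonempty hne
  have hxQ := (isExtreme_tightFace T).extremePoints_subset_extremePoints hx
  set S := Finset.univ.filter (fun i => x i = 1)
  have hxS : ∀ i, x i = if i ∈ S then 1 else 0 := by
    intro i
    obtain ⟨z, hz⟩ := hQ x hxQ i
    have hbox := tightFace_subset_Icc hiso T hx.1
    have h0 : (0 : ℝ) ≤ z := hz ▸ hbox.1 i
    have h1 : (z : ℝ) ≤ 1 := hz ▸ hbox.2 i
    obtain rfl | rfl : z = 0 ∨ z = 1 := by
      have : 0 ≤ z ∧ z ≤ 1 := ⟨by exact_mod_cast h0, by exact_mod_cast h1⟩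
      omega
    all_goals simp [S, hz]
  refine ⟨S, fun i hi => ?_, fun e he => ?_⟩
  · by_contra hiT
    have h0 := hx.1.2.1 i hiT
    simp only [S, Finset.mem_filter, Finset.mem_univ, true_and] at hi
    linarith
  · have hsum := hx.1.2.2 e he
    rw [Finset.sum_congr rfl (fun i _ => hxS i), Finset.sum_ite_mem, Finset.sum_const,
      nsmul_one] at hsum
    exact_mod_cast hsum

theorem exists_transversal_partition (hiso : ∀ i : Fin n, ∃ e ∈ C.edges, i ∈ e)
    (hQ : C.QAIntegral) :
    ∀ (k : ℕ) (T : Finset (Fin n)), (∀ e ∈ C.edges, (e ∩ T).card = k) →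
      ∃ X : Fin k → Finset (Fin n), Pairwise (Disjoint on X) ∧ (∀ v, v ∈ T ↔ ∃ i, v ∈ X i) ∧
        ∀ e ∈ C.edges, ∀ i, (e ∩ X i).card = 1
  | 0, T, hT => by
    refine ⟨Fin.elim0, fun i => i.elim0, fun v => ?_, fun _ _ i => i.elim0⟩
    simp only [IsEmpty.exists_iff, iff_false]
    intro hv
    obtain ⟨e, he, hve⟩ := hiso v
    exact (Finset.card_pos.mpr ⟨v, Finset.mem_inter.mpr ⟨hve, hv⟩⟩).ne' (hT e he)
  | k + 1, T, hT => by
    obtain ⟨S, hST, hS⟩ := exists_transversal_subset hiso hQ k.succ_pos hT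
    have hTS : ∀ e ∈ C.edges, (e ∩ (T \ S)).card = k := by
      intro e he
      have := Finset.card_sdiff_add_card_inter (e ∩ T) S
      rw [Finset.inter_sdiff_assoc, Finset.inter_assoc, Finset.inter_eq_right.mpr hST, hT e he,
        hS e he] at this
      omega
    obtain ⟨X, hX, hXT, hXe⟩ := exists_transversal_partition hiso hQ k (T \ S) hTS
    have hSX : ∀ i, Disjoint S (X i) := fun i =>
      Finset.disjoint_left.mpr fun v hvS hvX => (Finset.mem_sdiff.mp ((hXT v).mpr ⟨i, hvX⟩)).2 hvS
    refine ⟨Fin.cons S X, ?_, fun v => ?_, fun e he i => ?_⟩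
    · intro i j hij
      cases i using Fin.cases <;> cases j using Fin.cases
      · exact absurd rfl hij
      · exact hSX _
      · exact (hSX _).symm
      · exact hX (fun h => hij (congrArg Fin.succ h))
    · rw [Fin.exists_fin_succ, Fin.cons_zero]
      simp only [Fin.cons_succ, ← hXT, Finset.mem_sdiff]
      by_cases hv : v ∈ S
      · simp [hv, hST hv]
      · simp [hv]
    · cases i using Fin.cases
      · exact hS e he
      · exact hXe e he _

theorem isMinCover_of_card_inter_eq_one {S : Finset (Fin n)} (hS : ∀ v ∈ S, ∃ e ∈ C.edges, v ∈ e)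
    (h : ∀ e ∈ C.edges, (e ∩ S).card = 1) : C.IsMinCover S := by
  refine ⟨fun e he => Finset.card_pos.mp (by rw [h e he]; exact one_pos), fun U hUS hU => ?_⟩
  refine Finset.Subset.antisymm hUS fun v hv => ?_
  obtain ⟨e, he, hve⟩ := hS v hv
  obtain ⟨w, hw⟩ := hU e he
  rw [Finset.mem_inter] at hw
  have hwv : w = v := Finset.card_le_one.mp (h e he).le w (Finset.mem_inter.mpr ⟨hw.1, hUS hw.2⟩)
    v (Finset.mem_inter.mpr ⟨hve, hv⟩)
  exact hwv ▸ hw.2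

end Clutter

/-- If `C` is a `d`-uniform clutter (without isolated vertices) whose set
covering polyhedron `Q(A)` is integral, then there are `d` mutually disjoint minimal vertex
covers `X_1, …, X_d` of `C` whose union is the vertex set; in particular every edge meets
each `X_k` in exactly one vertex. -/
theorem stmt1 {n d : ℕ} (C : Clutter n) (hC : C.Uniform d)
    (hiso : ∀ i : Fin n, ∃ e ∈ C.edges, i ∈ e) (hQ : C.QAIntegral) :
    ∃ X : Fin d → Finset (Fin n),
      (∀ i j, i ≠ j → Disjoint (X i) (X j)) ∧
      (∀ i, C.IsMinCover (X i)) ∧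
      (∀ v : Fin n, ∃ i, v ∈ X i) ∧
      (∀ e ∈ C.edges, ∀ i, (e ∩ X i).card = 1) := by
  obtain ⟨X, hX, hXuniv, hXe⟩ := C.exists_transversal_partition hiso hQ d Finset.univ
    fun e he => by rw [Finset.inter_univ, hC e he]
  exact ⟨X, hX, fun i => Clutter.isMinCover_of_card_inter_eq_one (fun v _ => hiso v) (hXe · · i),
    fun v => (hXuniv v).mp (Finset.mem_univ v), hXe⟩
end

section
/- Let C be a d-uniform clutter with a perfect matching whose set covering polyhedron Q(A) is integral. Then the number of vertices of C equals d·α₀(C), where α₀(C) is the vertex covering number. -/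
open Finset

/-!
A perfect matching `M` of a `d`-uniform clutter gives `n = d·|M|`, and `|M| ≤ α₀(C)` because any
cover meets the edges of `M` in disjoint nonempty sets. Conversely, the constant vector `1/d` lies
in `Q(A)` with coordinate sum `|M|`. The coordinate sum attains its minimum over `Q(A)` at an extreme
point, which is integral when `Q(A)` is, and the support of a nonnegative integral point of `Q(A)`
is a cover of size at most its coordinate sum; hence `α₀(C) ≤ |M|`.
-/
theorem exists_extremePoint_le_apply_of_isCompact
    {E : Type*} [AddCommGroup E] [Module ℝ E] [TopologicalSpace E] [T2Space E]
    [IsTopologicalAddGroup E] [ContinuousSMul ℝ E] [LocallyConvexSpace ℝ E]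
    {K : Set E} (hK : IsClosed K) (l : StrongDual ℝ E) {x : E} (hx : x ∈ K)
    (hcomp : IsCompact {y ∈ K | l x ≤ l y}) :
    ∃ z ∈ K.extremePoints ℝ, l x ≤ l z := by
  obtain ⟨m, ⟨hmK, hxm⟩, hmax⟩ :=
    hcomp.exists_isMaxOn ⟨x, hx, le_rfl⟩ l.continuous.continuousOn
  have hmaxK : ∀ y ∈ K, l y ≤ l m := fun y hy =>
    (le_total (l x) (l y)).elim (fun h => hmax ⟨hy, h⟩) fun h => h.trans hxm
  have hB : IsExposed ℝ K (l.toExposed K) := ContinuousLinearMap.toExposed.isExposed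
  have hBsub : l.toExposed K ⊆ {y ∈ K | l x ≤ l y} := fun y hy =>
    ⟨hy.1, hxm.trans (hy.2 m hmK)⟩
  obtain ⟨z, hz⟩ := (hcomp.of_isClosed_subset (hB.isClosed hK) hBsub).extremePoints_nonempty
    ⟨m, hmK, hmaxK⟩
  exact ⟨z, hB.isExtreme.extremePoints_subset_extremePoints hz, (hBsub hz.1).2⟩

theorem isCompact_sum_le_of_nonneg {ι : Type*} [Fintype ι] {K : Set (ι → ℝ)} (hK : IsClosed K)
    (hnonneg : ∀ y ∈ K, ∀ i, 0 ≤ y i) (c : ℝ) : IsCompact {y ∈ K | ∑ i, y i ≤ c} := by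
  have hclosed : IsClosed {y ∈ K | ∑ i, y i ≤ c} :=
    hK.inter (isClosed_le (continuous_finsetSum _ fun i _ => continuous_apply i) continuous_const)
  refine (isCompact_Icc (a := 0) (b := fun _ => c)).of_isClosed_subset hclosed
    fun y ⟨hy, hyc⟩ => ⟨hnonneg y hy, fun i => ?_⟩
  exact (Finset.single_le_sum (fun j _ => hnonneg y hy j) (Finset.mem_univ i)).trans hyc

theorem exists_extremePoint_sum_le {ι : Type*} [Fintype ι] {K : Set (ι → ℝ)} (hK : IsClosed K)
    (hnonneg : ∀ y ∈ K, ∀ i, 0 ≤ y i) {x : ι → ℝ} (hx : x ∈ K) :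
    ∃ z ∈ K.extremePoints ℝ, ∑ i, z i ≤ ∑ i, x i := by
  let l : StrongDual ℝ (ι → ℝ) := -∑ i, ContinuousLinearMap.proj i
  have hl : ∀ y, l y = -∑ i, y i := fun y => by simp [l]
  obtain ⟨z, hz, hxz⟩ := exists_extremePoint_le_apply_of_isCompact hK l hx (by
    simpa only [hl, neg_le_neg_iff] using isCompact_sum_le_of_nonneg hK hnonneg (∑ i, x i))
  exact ⟨z, hz, by simpa only [hl, neg_le_neg_iff] using hxz⟩

namespace Clutter

open Finset

variable {n : ℕ} (C : Clutter n)

theorem isClosed_QA : IsClosed C.QA := by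
  have h : C.QA = (⋂ i, {x | 0 ≤ x i}) ∩ ⋂ e ∈ C.edges, {x | 1 ≤ ∑ i ∈ e, x i} := by
    ext x
    simp [QA]
  rw [h]
  exact (isClosed_iInter fun i => isClosed_le continuous_const (continuous_apply i)).inter
    (isClosed_biInter fun e _ => isClosed_le continuous_const
      (continuous_finsetSum _ fun i _ => continuous_apply i))

theorem const_inv_mem_QA {d : ℕ} (hC : C.Uniform d) (hd : d ≠ 0) :
    (fun _ => (d : ℝ)⁻¹) ∈ C.QA := by
  refine ⟨fun _ => by positivity, fun e he => ?_⟩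
  rw [sum_const, hC e he, nsmul_eq_mul, mul_inv_cancel₀ (by exact_mod_cast hd)]

theorem isCover_univ : C.IsCover univ := fun e he => by
  simpa using C.nonempty_edges e he

theorem coverNumber_le {S : Finset (Fin n)} (hS : C.IsCover S) : C.coverNumber ≤ S.card :=
  Nat.sInf_le ⟨S, hS, rfl⟩

theorem exists_isCover_card_eq_coverNumber : ∃ S, C.IsCover S ∧ S.card = C.coverNumber :=
  Nat.sInf_mem (s := {k | ∃ S, C.IsCover S ∧ S.card = k}) ⟨_, univ, C.isCover_univ, rfl⟩

theorem card_le_card_of_isCover {M : Finset (Finset (Fin n))}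
    (hdisj : ∀ e ∈ M, ∀ f ∈ M, e ≠ f → Disjoint e f) (hM : M ⊆ C.edges)
    {S : Finset (Fin n)} (hS : C.IsCover S) : M.card ≤ S.card := by
  calc M.card = ∑ _e ∈ M, 1 := by simp
    _ ≤ ∑ e ∈ M, (e ∩ S).card := sum_le_sum fun e he => card_pos.mpr (hS e (hM he))
    _ = (M.biUnion (· ∩ S)).card :=
        (card_biUnion fun e he f hf hef =>
          (hdisj e he f hf hef).mono inter_subset_left inter_subset_left).symm
    _ ≤ S.card := card_le_card (biUnion_subset.mpr fun _ _ => inter_subset_right)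

theorem card_le_coverNumber {M : Finset (Finset (Fin n))}
    (hdisj : ∀ e ∈ M, ∀ f ∈ M, e ≠ f → Disjoint e f) (hM : M ⊆ C.edges) :
    M.card ≤ C.coverNumber := by
  obtain ⟨S, hS, hcard⟩ := C.exists_isCover_card_eq_coverNumber
  exact hcard ▸ C.card_le_card_of_isCover hdisj hM hS

theorem eq_mul_card_of_perfectMatching {d : ℕ} (hC : C.Uniform d) {M : Finset (Finset (Fin n))}
    (hM : M ⊆ C.edges) (hdisj : ∀ e ∈ M, ∀ f ∈ M, e ≠ f → Disjoint e f)
    (hcov : ∀ i, ∃ e ∈ M, i ∈ e) : n = d * M.card := by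
  have hunion : M.biUnion id = univ := eq_univ_of_forall fun i => by
    simpa only [mem_biUnion, id] using hcov i
  calc n = (M.biUnion id).card := by rw [hunion, card_univ, Fintype.card_fin]
    _ = ∑ e ∈ M, e.card := card_biUnion hdisj
    _ = d * M.card := by
      rw [sum_congr rfl fun e he => hC e (hM he), sum_const, smul_eq_mul, mul_comm]

theorem exists_isCover_card_le_sum_of_int {z : Fin n → ℝ} (hz : z ∈ C.QA)
    (hint : ∀ i, ∃ k : ℤ, z i = k) : ∃ S, C.IsCover S ∧ (S.card : ℝ) ≤ ∑ i, z i := by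
  have hz01 : ∀ i, z i = 0 ∨ 1 ≤ z i := fun i => by
    obtain ⟨k, hk⟩ := hint i
    have : (0 : ℤ) ≤ k := by exact_mod_cast hk ▸ hz.1 i
    rcases (show k = 0 ∨ 1 ≤ k by omega) with h | h
    · left; simp [hk, h]
    · right; rw [hk]; exact_mod_cast h
  refine ⟨univ.filter (1 ≤ z ·), fun e he => ?_, ?_⟩
  · by_contra hempty
    have hzero : ∀ i ∈ e, z i = 0 := fun i hi => (hz01 i).resolve_right fun h1 =>
      hempty ⟨i, mem_inter.mpr ⟨hi, mem_filter.mpr ⟨mem_univ i, h1⟩⟩⟩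
    have := hz.2 e he
    rw [sum_eq_zero hzero] at this
    linarith
  · calc ((univ.filter (1 ≤ z ·)).card : ℝ) = ∑ _i ∈ univ.filter (1 ≤ z ·), (1 : ℝ) := by simp
      _ ≤ ∑ i ∈ univ.filter (1 ≤ z ·), z i := sum_le_sum fun i hi => (mem_filter.mp hi).2
      _ ≤ ∑ i, z i := sum_le_sum_of_subset_of_nonneg (subset_univ _) fun i _ _ => hz.1 i

theorem exists_isCover_card_le_sum (hQ : C.QAIntegral) {x : Fin n → ℝ} (hx : x ∈ C.QA) :
    ∃ S, C.IsCover S ∧ (S.card : ℝ) ≤ ∑ i, x i := by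
  obtain ⟨z, hz, hzx⟩ := exists_extremePoint_sum_le C.isClosed_QA (fun y hy => hy.1) hx
  obtain ⟨S, hS, hSz⟩ := C.exists_isCover_card_le_sum_of_int hz.1 (hQ z hz)
  exact ⟨S, hS, hSz.trans hzx⟩

end Clutter

/-- If `C` is a `d`-uniform clutter with a perfect matching whose set
covering polyhedron `Q(A)` is integral, then the number of vertices equals `d · α₀(C)`. -/
theorem stmt2 {n d : ℕ} (C : Clutter n) (hC : C.Uniform d)
    (hpm : C.HasPerfectMatching) (hQ : C.QAIntegral) :
    n = d * C.coverNumber := by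
  obtain ⟨M, hME, hdisj, hcov⟩ := hpm
  have hn := C.eq_mul_card_of_perfectMatching hC hME hdisj hcov
  rcases eq_or_ne d 0 with rfl | hd
  · simpa using hn
  obtain ⟨S, hS, hScard⟩ := C.exists_isCover_card_le_sum hQ (C.const_inv_mem_QA hC hd)
  have hsum : ∑ _i : Fin n, (d : ℝ)⁻¹ = M.card := by
    have hnR : (n : ℝ) = d * M.card := by exact_mod_cast hn
    rw [sum_const, card_univ, Fintype.card_fin, nsmul_eq_mul, hnR]
    field_simp
  have hupper : C.coverNumber ≤ M.card :=
    (C.coverNumber_le hS).trans (by exact_mod_cast hScard.trans hsum.le)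
  rwa [le_antisymm hupper (C.card_le_coverNumber hdisj hME)]
end
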